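/- Almost surely, for every pair of points (m,s) ≤ (n,t) in ℤ × ℝ, there exist leftmost and rightmost geodesics for Brownian last-passage percolation: there are maximizing sequences s^L, s^R ∈ Π_{(m,s),(n,t)} of the energy E(s_{m,n}) = Σ_{r=m}^n B_r(s_{r-1}, s_r) such that any maximizing sequence s satisfies s_r^L ≤ s_r ≤ s_r^R for all m ≤ r ≤ n. -/

import Mathlib

open MeasureTheory ProbabilityTheory Filter Set

/-- A two-sided standard Brownian motion. -/
def IsTwoSidedStdBM {Ω : Type*} [MeasurableSpace Ω] (P : Measure Ω)
    (W : ℝ → Ω → ℝ) : Prop :=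
  (∀ t, Measurable (W t)) ∧
  (∀ᵐ ω ∂P, W 0 ω = 0 ∧ Continuous fun t => W t ω) ∧
  (∀ (n : ℕ) (t : Fin (n + 1) → ℝ), Monotone t →
    iIndepFun
      (fun i : Fin n => fun ω => W (t i.succ) ω - W (t i.castSucc) ω) P) ∧
  (∀ s t : ℝ, s ≤ t →
    P.map (fun ω => W t ω - W s ω) = gaussianReal 0 ((t - s).toNNReal))

/-- A sequence `σ : ℤ → ℝ` encodes an up-right path from `(m,s)` to `(n,t)` via its
jump times: `σ (m-1) = s`, `σ n = t`, and `σ` is nondecreasing on `[m-1, n]`. -/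
def IsPath (m n : ℤ) (s t : ℝ) (σ : ℤ → ℝ) : Prop :=
  σ (m - 1) = s ∧ σ n = t ∧ ∀ r : ℤ, m - 1 ≤ r → r < n → σ r ≤ σ (r + 1)

/-- The energy `Σ_{r=m}^n B_r(σ_{r-1}, σ_r)` of a path in the environment `X`. -/
noncomputable def energy (X : ℤ → ℝ → ℝ) (m n : ℤ) (σ : ℤ → ℝ) : ℝ :=
  ∑ r ∈ Finset.Icc m n, (X r (σ r) - X r (σ (r - 1)))

/-!
Since `X (a ⊓ b) + X (a ⊔ b) = X a + X b` for every function `X` of a real variable, the energy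
is modular for the pointwise lattice operations on paths. On the compact sublattice of paths with
values in `[s, t]` the maximizers of a continuous supermodular function form a nonempty compact
sublattice, which therefore has a least and a greatest element: the leftmost and rightmost
geodesics.
-/

section CompactSublattice

variable {α : Type*} [TopologicalSpace α] {s : Set α}

theorem InfClosed.exists_isLeast_of_isCompact [SemilatticeInf α] [ClosedIicTopology α]
    (hs : InfClosed s) (hc : IsCompact s) (hne : s.Nonempty) : ∃ x, IsLeast s x := by
  have : Nonempty s := hne.to_subtype
  suffices (s ∩ ⋂ x : s, Iic (x : α)).Nonempty by
    obtain ⟨x, hxs, hx⟩ := this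
    exact ⟨x, hxs, fun y hy => mem_iInter.1 hx ⟨y, hy⟩⟩
  by_contra H
  rw [not_nonempty_iff_eq_empty] at H
  have hdir : Directed (· ⊇ ·) fun x : s => Iic (x : α) := fun x y =>
    ⟨⟨x ⊓ y, hs x.2 y.2⟩, Iic_subset_Iic.2 inf_le_left, Iic_subset_Iic.2 inf_le_right⟩
  obtain ⟨x, hx⟩ := hc.elim_directed_family_closed _ (fun _ => isClosed_Iic) H hdir
  exact (eq_empty_iff_forall_notMem.1 hx) x ⟨x.2, le_rfl⟩

theorem SupClosed.exists_isGreatest_of_isCompact [SemilatticeSup α] [ClosedIciTopology α]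
    (hs : SupClosed s) (hc : IsCompact s) (hne : s.Nonempty) : ∃ x, IsGreatest s x :=
  InfClosed.exists_isLeast_of_isCompact (α := αᵒᵈ) hs hc hne

theorem IsCompact.isCompact_inter_setOf_isMaxOn [T2Space α] {K : Set α} {f : α → ℝ}
    (hK : IsCompact K) (hf : ContinuousOn f K) {x₀ : α} (hx₀ : x₀ ∈ K) (hmax : IsMaxOn f K x₀) :
    IsCompact (K ∩ {x | IsMaxOn f K x}) := by
  have : K ∩ {x | IsMaxOn f K x} = K ∩ f ⁻¹' Ici (f x₀) := by
    ext x
    exact and_congr_right fun _ =>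
      ⟨fun h => h hx₀, fun h => isMaxOn_iff.2 fun y hy => (hmax hy).trans h⟩
  rw [this]
  exact hK.of_isClosed_subset (hf.preimage_isClosed_of_isClosed hK.isClosed isClosed_Ici)
    inter_subset_left

end CompactSublattice

section Supermodular

variable {α : Type*} [Lattice α] {K : Set α} {f : α → ℝ}

def SupermodularOn (f : α → ℝ) (K : Set α) : Prop :=
  ∀ a ∈ K, ∀ b ∈ K, f a + f b ≤ f (a ⊓ b) + f (a ⊔ b)

theorem SupermodularOn.isSublattice_inter_setOf_isMaxOn (hf : SupermodularOn f K)
    (hK : IsSublattice K) : IsSublattice (K ∩ {x | IsMaxOn f K x}) := by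
  constructor
  · rintro a ⟨haK, ha⟩ b ⟨hbK, hb⟩
    have : f (a ⊓ b) ≤ f b := hb (hK.infClosed haK hbK)
    have : f a ≤ f (a ⊔ b) := by linarith [hf a haK b hbK]
    exact ⟨hK.supClosed haK hbK, isMaxOn_iff.2 fun y hy => (ha hy).trans this⟩
  · rintro a ⟨haK, ha⟩ b ⟨hbK, hb⟩
    have : f (a ⊔ b) ≤ f a := ha (hK.supClosed haK hbK)
    have : f b ≤ f (a ⊓ b) := by linarith [hf a haK b hbK]
    exact ⟨hK.infClosed haK hbK, isMaxOn_iff.2 fun y hy => (hb hy).trans this⟩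

variable [TopologicalSpace α]

theorem SupermodularOn.exists_isLeast_isGreatest_setOf_isMaxOn [OrderClosedTopology α]
    (hf : SupermodularOn f K) (hfc : ContinuousOn f K) (hK : IsCompact K)
    (hKl : IsSublattice K) (hne : K.Nonempty) :
    ∃ a b, IsLeast (K ∩ {x | IsMaxOn f K x}) a ∧ IsGreatest (K ∩ {x | IsMaxOn f K x}) b := by
  obtain ⟨x₀, hx₀, hmax⟩ := hK.exists_isMaxOn hne hfc
  have hM := hK.isCompact_inter_setOf_isMaxOn hfc hx₀ hmax
  have hMl := hf.isSublattice_inter_setOf_isMaxOn hKl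
  obtain ⟨a, ha⟩ := hMl.infClosed.exists_isLeast_of_isCompact hM ⟨x₀, hx₀, hmax⟩
  obtain ⟨b, hb⟩ := hMl.supClosed.exists_isGreatest_of_isCompact hM ⟨x₀, hx₀, hmax⟩
  exact ⟨a, b, ha, hb⟩

end Supermodular

theorem apply_min_add_apply_max {γ β : Type*} [LinearOrder γ] [AddCommMagma β] (g : γ → β)
    (a b : γ) :
    g (min a b) + g (max a b) = g a + g b := by
  rcases le_total a b with h | h
  · rw [min_eq_left h, max_eq_right h]
  · rw [min_eq_right h, max_eq_left h, add_comm]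

section Paths

variable {m n : ℤ} {s t : ℝ} {σ : ℤ → ℝ}

theorem IsPath.monotoneOn (h : IsPath m n s t σ) : MonotoneOn σ (Icc (m - 1) n) :=
  monotoneOn_of_le_add_one ordConnected_Icc fun r _ hr hr₁ =>
    h.2.2 r hr.1 (Int.lt_of_add_one_le hr₁.2)

theorem IsPath.mem_Icc (h : IsPath m n s t σ) {r : ℤ} (hr : r ∈ Icc (m - 1) n) :
    σ r ∈ Icc s t := by
  have hmn : m - 1 ≤ n := hr.1.trans hr.2
  constructor
  · exact h.1 ▸ h.monotoneOn (left_mem_Icc.2 hmn) hr hr.1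
  · exact h.2.1 ▸ h.monotoneOn hr (right_mem_Icc.2 hmn) hr.2

theorem isSublattice_setOf_isPath : IsSublattice {σ | IsPath m n s t σ} :=
  ⟨fun _ h _ h' => ⟨by simp [h.1, h'.1], by simp [h.2.1, h'.2.1],
      fun r h₁ h₂ => sup_le_sup (h.2.2 r h₁ h₂) (h'.2.2 r h₁ h₂)⟩,
    fun _ h _ h' => ⟨by simp [h.1, h'.1], by simp [h.2.1, h'.2.1],
      fun r h₁ h₂ => inf_le_inf (h.2.2 r h₁ h₂) (h'.2.2 r h₁ h₂)⟩⟩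

theorem isClosed_setOf_isPath : IsClosed {σ | IsPath m n s t σ} := by
  simp only [IsPath, ofPred_and, ofPred_forall]
  exact (isClosed_eq (continuous_apply _) continuous_const).inter
    ((isClosed_eq (continuous_apply _) continuous_const).inter
      (isClosed_iInter fun r => isClosed_iInter fun _ => isClosed_iInter fun _ =>
        isClosed_le (continuous_apply r) (continuous_apply (r + 1))))

/-- Paths leave `σ` unconstrained off `[m - 1, n]`; confining those values to `[s, t]` as well
makes the set of paths compact without changing the set of energies. -/
def boundedPaths (m n : ℤ) (s t : ℝ) : Set (ℤ → ℝ) :=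
  {σ | IsPath m n s t σ} ∩ univ.pi fun _ => Icc s t

theorem isCompact_boundedPaths : IsCompact (boundedPaths m n s t) :=
  (isCompact_univ_pi fun _ => isCompact_Icc).inter_left isClosed_setOf_isPath

theorem isSublattice_boundedPaths : IsSublattice (boundedPaths m n s t) :=
  isSublattice_setOf_isPath.inter (isSublattice_pi fun _ _ => LinearOrder.isSublattice _)

theorem boundedPaths_nonempty (hmn : m ≤ n) (hst : s ≤ t) : (boundedPaths m n s t).Nonempty := by
  refine ⟨fun r => if r < m then s else t, ⟨by simp, by simp [hmn], fun r _ _ => ?_⟩,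
    fun r _ => ?_⟩
  · dsimp only
    split_ifs <;> first | exact le_rfl | exact hst | omega
  · dsimp only
    split_ifs <;> simp [hst]

theorem IsPath.exists_mem_boundedPaths_eqOn (h : IsPath m n s t σ) (hst : s ≤ t) :
    ∃ τ ∈ boundedPaths m n s t, EqOn τ σ (Icc (m - 1) n) := by
  have hclamp : EqOn (fun r => max s (min (σ r) t)) σ (Icc (m - 1) n) := fun r hr => by
    have := h.mem_Icc hr
    simp [this.1, this.2]
  refine ⟨fun r => max s (min (σ r) t), ⟨⟨?_, ?_, fun r h₁ h₂ => ?_⟩, fun r _ => ?_⟩, hclamp⟩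
  · simp [h.1, hst]
  · simp [h.2.1, hst]
  · exact max_le_max le_rfl (min_le_min (h.2.2 r h₁ h₂) le_rfl)
  · exact ⟨le_max_left _ _, max_le hst (min_le_right _ _)⟩

end Paths

section Energy

variable {X : ℤ → ℝ → ℝ} {m n : ℤ}

theorem energy_congr {σ σ' : ℤ → ℝ} (h : EqOn σ σ' (Icc (m - 1) n)) :
    energy X m n σ = energy X m n σ' := by
  refine Finset.sum_congr rfl fun r hr => ?_
  rw [Finset.mem_Icc] at hr
  rw [h ⟨by omega, hr.2⟩, h ⟨by omega, by omega⟩]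

theorem energy_inf_add_energy_sup (σ σ' : ℤ → ℝ) :
    energy X m n (σ ⊓ σ') + energy X m n (σ ⊔ σ') = energy X m n σ + energy X m n σ' := by
  simp only [energy, ← Finset.sum_add_distrib]
  refine Finset.sum_congr rfl fun r _ => ?_
  have h₁ := apply_min_add_apply_max (X r) (σ r) (σ' r)
  have h₂ := apply_min_add_apply_max (X r) (σ (r - 1)) (σ' (r - 1))
  simp only [Pi.inf_apply, Pi.sup_apply]
  linarith

theorem continuous_energy (hX : ∀ r, Continuous (X r)) : Continuous (energy X m n) :=
  continuous_finsetSum _ fun r _ =>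
    ((hX r).comp (continuous_apply r)).sub ((hX r).comp (continuous_apply (r - 1)))

end Energy

theorem exists_leftmost_rightmost_geodesic {X : ℤ → ℝ → ℝ} (hX : ∀ r, Continuous (X r))
    {m n : ℤ} {s t : ℝ} (hmn : m ≤ n) (hst : s ≤ t) :
    ∃ σL σR : ℤ → ℝ,
      IsPath m n s t σL ∧ IsPath m n s t σR ∧
      (∀ σ, IsPath m n s t σ → energy X m n σ ≤ energy X m n σL) ∧
      (∀ σ, IsPath m n s t σ → energy X m n σ ≤ energy X m n σR) ∧
      (∀ σ, IsPath m n s t σ → (∀ σ', IsPath m n s t σ' → energy X m n σ' ≤ energy X m n σ) →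
        ∀ r : ℤ, m ≤ r → r ≤ n → σL r ≤ σ r ∧ σ r ≤ σR r) := by
  set K := boundedPaths m n s t
  have hsm : SupermodularOn (energy X m n) K := fun σ _ σ' _ =>
    (energy_inf_add_energy_sup σ σ').ge
  obtain ⟨σL, σR, hL, hR⟩ := hsm.exists_isLeast_isGreatest_setOf_isMaxOn
    (continuous_energy hX).continuousOn isCompact_boundedPaths isSublattice_boundedPaths
    (boundedPaths_nonempty hmn hst)
  set M := K ∩ {x | IsMaxOn (energy X m n) K x}
  have hbound : ∀ τ ∈ M, ∀ σ, IsPath m n s t σ →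
      energy X m n σ ≤ energy X m n τ := by
    intro τ hτ σ hσ
    obtain ⟨σ', hσ', heq⟩ := hσ.exists_mem_boundedPaths_eqOn hst
    exact energy_congr heq ▸ hτ.2 hσ'
  refine ⟨σL, σR, hL.1.1.1, hR.1.1.1, hbound σL hL.1, hbound σR hR.1,
    fun σ hσ hmax r hmr hrn => ?_⟩
  obtain ⟨σ', hσ', heq⟩ := hσ.exists_mem_boundedPaths_eqOn hst
  have hσ'M : σ' ∈ M :=
    ⟨hσ', isMaxOn_iff.2 fun τ hτ => energy_congr heq ▸ hmax τ hτ.1⟩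
  rw [← heq ⟨by omega, hrn⟩]
  exact ⟨hL.2 hσ'M r, hR.2 hσ'M r⟩

theorem leftmost_rightmost_geodesics_general {Ω : Type*} [MeasurableSpace Ω]
    (P : Measure Ω)
    (B : ℤ → ℝ → Ω → ℝ)
    (hBM : ∀ r : ℤ, IsTwoSidedStdBM P (B r)) :
    ∀ᵐ ω ∂P, ∀ (m n : ℤ) (s t : ℝ), m ≤ n → s ≤ t →
      ∃ σL σR : ℤ → ℝ,
        IsPath m n s t σL ∧ IsPath m n s t σR ∧
        (∀ σ, IsPath m n s t σ →
          energy (fun r x => B r x ω) m n σ ≤ energy (fun r x => B r x ω) m n σL) ∧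
        (∀ σ, IsPath m n s t σ →
          energy (fun r x => B r x ω) m n σ ≤ energy (fun r x => B r x ω) m n σR) ∧
        (∀ σ, IsPath m n s t σ →
          (∀ σ', IsPath m n s t σ' →
            energy (fun r x => B r x ω) m n σ' ≤ energy (fun r x => B r x ω) m n σ) →
          ∀ r : ℤ, m ≤ r → r ≤ n → σL r ≤ σ r ∧ σ r ≤ σR r) := by
  have hcont : ∀ᵐ ω ∂P, ∀ r : ℤ, Continuous fun x => B r x ω :=
    ae_all_iff.2 fun r => (hBM r).2.1.mono fun _ h => h.2
  filter_upwards [hcont] with ω hω m n s t hmn hst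
  exact exists_leftmost_rightmost_geodesic hω hmn hst

/-- Lemma 2.2: almost surely, for every pair of points `(m,s) ≤ (n,t)` in `ℤ × ℝ`,
there exist leftmost and rightmost geodesics in Brownian last-passage percolation:
maximizing paths `σL, σR` such that every maximizing path `σ` satisfies
`σL r ≤ σ r ≤ σR r` for `m ≤ r ≤ n`. -/
theorem leftmost_rightmost_geodesics {Ω : Type*} [MeasurableSpace Ω]
    (P : Measure Ω) [IsProbabilityMeasure P]
    (B : ℤ → ℝ → Ω → ℝ)
    (hBM : ∀ r : ℤ, IsTwoSidedStdBM P (B r))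
    (hindep : iIndepFun
      (fun r : ℤ => fun ω => fun t : ℝ => B r t ω) P) :
    ∀ᵐ ω ∂P, ∀ (m n : ℤ) (s t : ℝ), m ≤ n → s ≤ t →
      ∃ σL σR : ℤ → ℝ,
        IsPath m n s t σL ∧ IsPath m n s t σR ∧
        (∀ σ, IsPath m n s t σ →
          energy (fun r x => B r x ω) m n σ ≤ energy (fun r x => B r x ω) m n σL) ∧
        (∀ σ, IsPath m n s t σ →
          energy (fun r x => B r x ω) m n σ ≤ energy (fun r x => B r x ω) m n σR) ∧
        (∀ σ, IsPath m n s t σ →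
          (∀ σ', IsPath m n s t σ' →
            energy (fun r x => B r x ω) m n σ' ≤ energy (fun r x => B r x ω) m n σ) →
          ∀ r : ℤ, m ≤ r → r ≤ n → σL r ≤ σ r ∧ σ r ≤ σR r) :=
  leftmost_rightmost_geodesics_general P B hBM
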